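/- Let firm f have strongly monotone responsive preferences and capacity c_f ≤ p_f (its peak). Then under any stable matching algorithm, f cannot obtain a strictly preferred set of workers by reporting a smaller capacity b < c_f: its match in any stable matching of the reduced-capacity instance has size b < |match at capacity c_f|, hence is strictly worse by strong monotonicity. -/
import Mathlib


/-- A many-to-one matching instance: firms `F` with capacities, workers `W`,
strict preferences of workers over `Option F` (`none` = unmatched), strict
preferences of firms over individual workers (`Option W`, `none` = keeping a
seat empty) together with a responsive extension to sets of workers. -/
structure MTO (F W : Type) [DecidableEq W] where
  cap : F → ℕ
  /-- `wlt w a b` : worker `w` strictly prefers `a` to `b`. -/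
  wlt : W → Option F → Option F → Prop
  wlt_trans : ∀ w a b c, wlt w a b → wlt w b c → wlt w a c
  wlt_irrefl : ∀ w a, ¬ wlt w a a
  wlt_trichot : ∀ w a b, a = b ∨ wlt w a b ∨ wlt w b a
  /-- `flt1 f a b` : firm `f` strictly prefers (single) worker option `a` to `b`. -/
  flt1 : F → Option W → Option W → Prop
  flt1_trans : ∀ f a b c, flt1 f a b → flt1 f b c → flt1 f a c
  flt1_irrefl : ∀ f a, ¬ flt1 f a a
  flt1_trichot : ∀ f a b, a = b ∨ flt1 f a b ∨ flt1 f b a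
  /-- `flt f S T` : firm `f` strictly prefers the set `S` to the set `T`
  (responsive extension of `flt1`). -/
  flt : F → Finset W → Finset W → Prop
  flt_trans : ∀ f S T U, flt f S T → flt f T U → flt f S U
  flt_irrefl : ∀ f S, ¬ flt f S S
  resp_add : ∀ f (S : Finset W) (w : W), w ∉ S →
    (flt f (insert w S) S ↔ flt1 f (some w) none)
  resp_swap : ∀ f (S : Finset W) (w w' : W), w ∉ S → w' ∉ S → w ≠ w' →
    (flt f (insert w S) (insert w' S) ↔ flt1 f (some w) (some w'))

variable {F W : Type} [DecidableEq W] [DecidableEq F] [Fintype W]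

/-- The set of workers matched to firm `f` under the matching `μ`. -/
def matchedSet (μ : W → Option F) (f : F) : Finset W :=
  Finset.univ.filter (fun w => μ w = some f)

/-- `μ` respects all capacity constraints. -/
def MTO.isMatching (I : MTO F W) (μ : W → Option F) : Prop :=
  ∀ f, (matchedSet μ f).card ≤ I.cap f

/-- No agent is matched to an unacceptable partner. -/
def MTO.indivRational (I : MTO F W) (μ : W → Option F) : Prop :=
  (∀ w f, μ w = some f → ¬ I.wlt w none (some f)) ∧
  (∀ w f, μ w = some f → ¬ I.flt1 f none (some w))

/-- The worker-firm pair `(w, f)` blocks `μ`. -/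
def MTO.blocks (I : MTO F W) (μ : W → Option F) (w : W) (f : F) : Prop :=
  I.wlt w (some f) (μ w) ∧
  ∃ S ⊆ matchedSet μ f, (insert w S).card ≤ I.cap f ∧
    I.flt f (insert w S) (matchedSet μ f)

/-- Stability: a feasible, individually rational matching with no blocking pair. -/
def MTO.isStable (I : MTO F W) (μ : W → Option F) : Prop :=
  I.isMatching μ ∧ I.indivRational μ ∧ ∀ w f, ¬ I.blocks μ w f

/-- `μ` is the worker-optimal stable matching (output of WPDA). -/
def MTO.workerOptimal (I : MTO F W) (μ : W → Option F) : Prop :=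
  I.isStable μ ∧ ∀ μ', I.isStable μ' → ∀ w, μ' w = μ w ∨ I.wlt w (μ w) (μ' w)

/-- `μ` is the firm-optimal stable matching (output of FPDA). -/
def MTO.firmOptimal (I : MTO F W) (μ : W → Option F) : Prop :=
  I.isStable μ ∧ ∀ μ', I.isStable μ' → ∀ f,
    matchedSet μ' f = matchedSet μ f ∨ I.flt f (matchedSet μ f) (matchedSet μ' f)

/-- The instance obtained from `I` by setting the capacity of firm `f` to `b`. -/
def MTO.withCap (I : MTO F W) (f : F) (b : ℕ) : MTO F W :=
  { I with cap := Function.update I.cap f b }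

/-- The peak of firm `f`: the largest number of workers matched to `f` in any
stable matching for any choice of `f`'s capacity. -/
noncomputable def MTO.peak (I : MTO F W) (f : F) : ℕ :=
  sSup {n | ∃ b μ, (I.withCap f b).isStable μ ∧ (matchedSet μ f).card = n}

/-- `w` proposes to `f` at some point of WPDA, where `μ` is the worker-optimal
stable matching (i.e. the WPDA outcome): `w` finds `f` acceptable and `f` is
weakly preferred by `w` to its final WPDA match. -/
def MTO.proposesTo (I : MTO F W) (μ : W → Option F) (w : W) (f : F) : Prop :=
  I.wlt w (some f) none ∧ (μ w = some f ∨ I.wlt w (some f) (μ w))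

/-- All workers in `S` are acceptable to `f`. -/
def MTO.acceptableSet (I : MTO F W) (f : F) (S : Finset W) : Prop :=
  ∀ w ∈ S, ¬ I.flt1 f none (some w)

/-- Strongly monotone preferences: any larger acceptable set is strictly
preferred to any smaller acceptable set. -/
def MTO.stronglyMonotone (I : MTO F W) (f : F) : Prop :=
  ∀ S T : Finset W, I.acceptableSet f S → I.acceptableSet f T →
    T.card < S.card → I.flt f S T
section ChainArgument

variable {F W : Type} [DecidableEq W] [DecidableEq F] [Fintype W]

set_option linter.unusedSectionVars false in
lemma mem_matchedSet {μ : W → Option F} {w : W} {g : F} :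
    w ∈ matchedSet μ g ↔ μ w = some g := by
  simp [matchedSet]

lemma matched_wlt_none (J : MTO F W) {ν : W → Option F} (hs : J.isStable ν)
    {w : W} {g : F} (h : ν w = some g) : J.wlt w (some g) none := by
  rcases J.wlt_trichot w (some g) none with he | h1 | h1
  · exact absurd he (by simp)
  · exact h1
  · exact absurd h1 (hs.2.1.1 w g h)

lemma matched_flt1_none (J : MTO F W) {ν : W → Option F} (hs : J.isStable ν)
    {w : W} {g : F} (h : ν w = some g) : J.flt1 g (some w) none := by
  rcases J.flt1_trichot g (some w) none with he | h1 | h1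
  · exact absurd he (by simp)
  · exact h1
  · exact absurd h1 (hs.2.1.2 w g h)

lemma block_add (J : MTO F W) {ν : W → Option F} (hs : J.isStable ν)
    {w : W} {g : F} (hw : w ∉ matchedSet ν g) (hacc : J.flt1 g (some w) none)
    (hp : J.wlt w (some g) (ν w)) (hroom : (matchedSet ν g).card < J.cap g) : False := by
  refine hs.2.2 w g ⟨hp, matchedSet ν g, Finset.Subset.refl _, ?_, ?_⟩
  · rw [Finset.card_insert_of_notMem hw]; omega
  · exact (J.resp_add g _ w hw).mpr hacc

lemma block_swap (J : MTO F W) {ν : W → Option F} (hs : J.isStable ν)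
    {w w'' : W} {g : F} (hw : w ∉ matchedSet ν g) (hw'' : w'' ∈ matchedSet ν g)
    (hp : J.wlt w (some g) (ν w)) (hf : J.flt1 g (some w) (some w'')) : False := by
  have hne : w ≠ w'' := fun he => hw (he ▸ hw'')
  refine hs.2.2 w g ⟨hp, (matchedSet ν g).erase w'', Finset.erase_subset _ _, ?_, ?_⟩
  · rw [Finset.card_insert_of_notMem (fun hc => hw (Finset.mem_of_mem_erase hc)),
      Finset.card_erase_of_mem hw'']
    have h1 : 1 ≤ (matchedSet ν g).card := Finset.card_pos.mpr ⟨w'', hw''⟩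
    have h2 := hs.1 g
    omega
  · have h := (J.resp_swap g ((matchedSet ν g).erase w'') w w''
      (fun hc => hw (Finset.mem_of_mem_erase hc)) (Finset.notMem_erase _ _) hne).mpr hf
    rwa [Finset.insert_erase hw''] at h

/-- Key comparative-statics lemma: if `f` has slack under a stable matching `ν`
of the instance with capacity `a` at `f`, then no stable matching (of any
instance differing only in `f`'s capacity) matches `f` to more workers. -/
lemma key_slack (I : MTO F W) (f : F) {a a' : ℕ} {ν ν' : W → Option F}
    (hν : (I.withCap f a).isStable ν) (hν' : (I.withCap f a').isStable ν')
    (hslack : (matchedSet ν f).card < a) :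
    (matchedSet ν' f).card ≤ (matchedSet ν f).card := by
  by_contra hgt
  push_neg at hgt
  set J₁ := I.withCap f a with hJ₁
  set J₂ := I.withCap f a' with hJ₂
  have hc1f : J₁.cap f = a := Function.update_self _ _ _
  have hc1 : ∀ g : F, g ≠ f → J₁.cap g = I.cap g := fun g hg => Function.update_of_ne hg _ _
  have hc2 : ∀ g : F, g ≠ f → J₂.cap g = I.cap g := fun g hg => Function.update_of_ne hg _ _
  -- build ever-growing chains
  have main : ∀ n : ℕ, ∃ (U : Finset W) (g : F), U.card = n ∧
      (∀ w ∈ U, ∃ g1 g2 : F, ν w = some g1 ∧ ν' w = some g2 ∧ I.wlt w (some g1) (some g2)) ∧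
      (∀ h : F, (U ∩ matchedSet ν' h).card + (if h = g then 1 else 0)
        = (U ∩ matchedSet ν h).card + (if h = f then 1 else 0)) := by
    intro n
    induction n with
    | zero => exact ⟨∅, f, rfl, by simp, fun h => by simp⟩
    | succ n ih =>
      obtain ⟨U, g, hcard, hgood, hinv⟩ := ih
      have hdisj : ∀ w ∈ U, ∀ h : F, w ∈ matchedSet ν h → w ∉ matchedSet ν' h := by
        intro w hw h h1 h2
        obtain ⟨g1, g2, e1, e2, hlt⟩ := hgood w hw
        rw [mem_matchedSet] at h1 h2
        rw [h1] at e1; rw [h2] at e2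
        have hgg : g1 = g2 := (Option.some.inj e1).symm.trans (Option.some.inj e2)
        rw [hgg] at hlt
        exact I.wlt_irrefl w _ hlt
      -- common continuation once a fresh worker is found
      have step : ∀ (g' : F) (w' : W), w' ∉ U → ν' w' = some g' →
          w' ∉ matchedSet ν g' → (¬ I.wlt w' (some g') (ν w')) →
          (∀ h : F, (U ∩ matchedSet ν' h).card + (if h = g' then 1 else 0)
            = (U ∩ matchedSet ν h).card + (if h = f then 1 else 0)) →
          ∃ (U' : Finset W) (g'' : F), U'.card = n + 1 ∧
            (∀ w ∈ U', ∃ g1 g2 : F, ν w = some g1 ∧ ν' w = some g2 ∧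
              I.wlt w (some g1) (some g2)) ∧
            (∀ h : F, (U' ∩ matchedSet ν' h).card + (if h = g'' then 1 else 0)
              = (U' ∩ matchedSet ν h).card + (if h = f then 1 else 0)) := by
        intro g w' hw'U hw'B hw'nA hno hinv'
        -- w' is matched under ν to some firm it strictly prefers to g
        have hgot : ∃ g'', ν w' = some g'' ∧ I.wlt w' (some g'') (some g) := by
          cases hν0 : ν w' with
          | none =>
            rcases I.wlt_trichot w' (some g) none with he | h | h
            · exact absurd he (by simp)
            · rw [hν0] at hno; exact absurd h hno
            · exact absurd h (hν'.2.1.1 w' g hw'B)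
          | some g'' =>
            rcases I.wlt_trichot w' (some g'') (some g) with he | h | h
            · obtain rfl := Option.some.inj he
              exact absurd (mem_matchedSet.mpr hν0) hw'nA
            · exact ⟨g'', rfl, h⟩
            · rw [hν0] at hno; exact absurd h hno
        obtain ⟨g'', hν0, hwlt'⟩ := hgot
        refine ⟨insert w' U, g'', ?_, ?_, ?_⟩
        · rw [Finset.card_insert_of_notMem hw'U, hcard]
        · intro w hw
          rcases Finset.mem_insert.1 hw with rfl | hwU
          · exact ⟨g'', g, hν0, hw'B, hwlt'⟩
          · exact hgood w hwU
        · intro h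
          have e1 : ((insert w' U) ∩ matchedSet ν' h).card
              = (U ∩ matchedSet ν' h).card + (if h = g then 1 else 0) := by
            by_cases hh : h = g
            · subst hh
              rw [Finset.insert_inter_of_mem (mem_matchedSet.mpr hw'B),
                Finset.card_insert_of_notMem (fun hc => hw'U (Finset.mem_inter.1 hc).1),
                if_pos rfl]
            · rw [Finset.insert_inter_of_notMem
                (fun hc => hh (Option.some.inj ((mem_matchedSet.mp hc).symm.trans hw'B)))]
              simp [hh]
          have e2 : ((insert w' U) ∩ matchedSet ν h).card
              = (U ∩ matchedSet ν h).card + (if h = g'' then 1 else 0) := by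
            by_cases hh : h = g''
            · subst hh
              rw [Finset.insert_inter_of_mem (mem_matchedSet.mpr hν0),
                Finset.card_insert_of_notMem (fun hc => hw'U (Finset.mem_inter.1 hc).1),
                if_pos rfl]
            · rw [Finset.insert_inter_of_notMem
                (fun hc => hh (Option.some.inj ((mem_matchedSet.mp hc).symm.trans hν0)))]
              simp [hh]
          rw [e1, e2]
          have hI := hinv' h
          split_ifs at hI ⊢ <;> omega
      -- counting: a fresh worker exists at firm `g`
      by_cases hgf : g = f
      · -- here the excess at f provides the fresh worker
        have hBge : (matchedSet ν g).card + 1 ≤ (matchedSet ν' g).card := by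
          rw [hgf]; exact hgt
        have hsub : U ∩ matchedSet ν g ⊆ matchedSet ν g \ matchedSet ν' g := by
          intro w hw
          exact Finset.mem_sdiff.mpr ⟨(Finset.mem_inter.1 hw).2,
            hdisj w (Finset.mem_inter.1 hw).1 g (Finset.mem_inter.1 hw).2⟩
        have h1 : (U ∩ matchedSet ν g).card ≤ (matchedSet ν g \ matchedSet ν' g).card :=
          Finset.card_le_card hsub
        have h2 := Finset.card_sdiff_add_card_inter (matchedSet ν g) (matchedSet ν' g)
        have h3 := Finset.card_sdiff_add_card_inter (matchedSet ν' g) (matchedSet ν g)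
        have h4 : matchedSet ν g ∩ matchedSet ν' g = matchedSet ν' g ∩ matchedSet ν g :=
          Finset.inter_comm _ _
        have hinvg := hinv g
        rw [if_pos rfl, if_pos hgf] at hinvg
        have h5 : ((matchedSet ν' g \ matchedSet ν g) ∩ U).card ≤ (U ∩ matchedSet ν' g).card :=
          Finset.card_le_card (fun w hw => Finset.mem_inter.mpr
            ⟨(Finset.mem_inter.1 hw).2, (Finset.mem_sdiff.1 (Finset.mem_inter.1 hw).1).1⟩)
        have h6 := Finset.card_sdiff_add_card_inter (matchedSet ν' g \ matchedSet ν g) U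
        have hfresh : ((matchedSet ν' g \ matchedSet ν g) \ U).Nonempty := by
          rw [← Finset.card_pos]
          rw [h4] at h2
          omega
        obtain ⟨w', hw'⟩ := hfresh
        have hw'U : w' ∉ U := (Finset.mem_sdiff.1 hw').2
        have hw'B : ν' w' = some g :=
          mem_matchedSet.mp (Finset.mem_sdiff.1 (Finset.mem_sdiff.1 hw').1).1
        have hw'nA : w' ∉ matchedSet ν g := (Finset.mem_sdiff.1 (Finset.mem_sdiff.1 hw').1).2
        have hno : ¬ I.wlt w' (some g) (ν w') := by
          intro hp
          exact block_add J₁ hν hw'nA (matched_flt1_none J₂ hν' hw'B) hp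
            (by rw [hgf, hc1f]; exact hslack)
        exact step g w' hw'U hw'B hw'nA hno hinv
      · -- g ≠ f : use the inherited witness w₀ and fullness of g under ν'
        have hinvg := hinv g
        rw [if_pos rfl, if_neg hgf] at hinvg
        have hw0ex : (U ∩ matchedSet ν g).Nonempty := by
          rw [← Finset.card_pos]; omega
        obtain ⟨w₀, hw₀⟩ := hw0ex
        have hw₀U : w₀ ∈ U := (Finset.mem_inter.1 hw₀).1
        have hw₀A : w₀ ∈ matchedSet ν g := (Finset.mem_inter.1 hw₀).2
        obtain ⟨g1, g2, e1, e2, hlt⟩ := hgood w₀ hw₀U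
        have hg1 : g1 = g := by
          have := mem_matchedSet.mp hw₀A
          rw [this] at e1; exact (Option.some.inj e1).symm
        rw [hg1] at hlt
        have hw₀B : w₀ ∉ matchedSet ν' g := hdisj w₀ hw₀U g hw₀A
        have hpref : I.wlt w₀ (some g) (ν' w₀) := by rw [e2]; exact hlt
        have hacc : I.flt1 g (some w₀) none :=
          matched_flt1_none J₁ hν (mem_matchedSet.mp hw₀A)
        have hfull : J₂.cap g ≤ (matchedSet ν' g).card := by
          by_contra hlt'
          push_neg at hlt'
          exact block_add J₂ hν' hw₀B hacc hpref hlt'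
        have hBge : (matchedSet ν g).card ≤ (matchedSet ν' g).card := by
          have ha := hν.1 g
          rw [hc1 g hgf] at ha
          rw [hc2 g hgf] at hfull
          omega
        have hsub : U ∩ matchedSet ν g ⊆ matchedSet ν g \ matchedSet ν' g := by
          intro w hw
          exact Finset.mem_sdiff.mpr ⟨(Finset.mem_inter.1 hw).2,
            hdisj w (Finset.mem_inter.1 hw).1 g (Finset.mem_inter.1 hw).2⟩
        have h1 : (U ∩ matchedSet ν g).card ≤ (matchedSet ν g \ matchedSet ν' g).card :=
          Finset.card_le_card hsub
        have h2 := Finset.card_sdiff_add_card_inter (matchedSet ν g) (matchedSet ν' g)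
        have h3 := Finset.card_sdiff_add_card_inter (matchedSet ν' g) (matchedSet ν g)
        have h4 : matchedSet ν g ∩ matchedSet ν' g = matchedSet ν' g ∩ matchedSet ν g :=
          Finset.inter_comm _ _
        have h5 : ((matchedSet ν' g \ matchedSet ν g) ∩ U).card ≤ (U ∩ matchedSet ν' g).card :=
          Finset.card_le_card (fun w hw => Finset.mem_inter.mpr
            ⟨(Finset.mem_inter.1 hw).2, (Finset.mem_sdiff.1 (Finset.mem_inter.1 hw).1).1⟩)
        have h6 := Finset.card_sdiff_add_card_inter (matchedSet ν' g \ matchedSet ν g) U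
        have hfresh : ((matchedSet ν' g \ matchedSet ν g) \ U).Nonempty := by
          rw [← Finset.card_pos]
          rw [h4] at h2
          omega
        obtain ⟨w', hw'⟩ := hfresh
        have hw'U : w' ∉ U := (Finset.mem_sdiff.1 hw').2
        have hw'B : ν' w' = some g :=
          mem_matchedSet.mp (Finset.mem_sdiff.1 (Finset.mem_sdiff.1 hw').1).1
        have hw'nA : w' ∉ matchedSet ν g := (Finset.mem_sdiff.1 (Finset.mem_sdiff.1 hw').1).2
        -- g strictly prefers w' to w₀
        have hbeat : I.flt1 g (some w') (some w₀) := by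
          rcases I.flt1_trichot g (some w') (some w₀) with he | h | h
          · obtain rfl := Option.some.inj he
            exact absurd hw₀A hw'nA
          · exact h
          · exact absurd h (fun hh =>
              block_swap J₂ hν' hw₀B (mem_matchedSet.mpr hw'B) hpref hh)
        have hno : ¬ I.wlt w' (some g) (ν w') := by
          intro hp
          exact block_swap J₁ hν hw'nA hw₀A hp hbeat
        exact step g w' hw'U hw'B hw'nA hno hinv
  obtain ⟨U, g, hcard, _, _⟩ := main (Fintype.card W + 1)
  have := Finset.card_le_univ U
  omega

end ChainArgument
/-- A firm with strongly monotone preferences and capacity at most its peak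
cannot benefit from reporting a smaller capacity `b < c_f` under any stable
matching algorithm: its match in any stable matching of the reduced-capacity
instance has size `b`, which is strictly smaller than its match size at
capacity `c_f`, hence the outcome is strictly worse. -/
theorem strongly_monotone_delete_useless_at_or_below_peak
    {F W : Type} [DecidableEq W] [DecidableEq F] [Fintype W]
    (I : MTO F W) (f : F)
    (hsm : I.stronglyMonotone f)
    (hpeak : I.cap f ≤ I.peak f)
    (b : ℕ) (hb : b < I.cap f)
    (μ μ' : W → Option F)
    (hμ : I.isStable μ)
    (hμ' : (I.withCap f b).isStable μ') :
    (matchedSet μ' f).card = b ∧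
    b < (matchedSet μ f).card ∧
    I.flt f (matchedSet μ f) (matchedSet μ' f) := by
  have hWC : I.withCap f (I.cap f) = I := by
    show ({ I with cap := Function.update I.cap f (I.cap f) } : MTO F W) = I
    rw [Function.update_eq_self]
  have hμs : (I.withCap f (I.cap f)).isStable μ := by rw [hWC]; exact hμ
  have hmem : I.peak f ∈
      {n | ∃ b μ, (I.withCap f b).isStable μ ∧ (matchedSet μ f).card = n} := by
    apply Nat.sSup_mem
    · refine ⟨(matchedSet μ f).card, I.cap f, μ, hμs, rfl⟩
    · exact ⟨Fintype.card W, fun n hn => by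
        obtain ⟨b', μ'', _, hn'⟩ := hn
        rw [← hn', ← Finset.card_univ]
        exact Finset.card_le_univ _⟩
  obtain ⟨bs, μs, hst, hcs⟩ := hmem
  have h1 : (matchedSet μ f).card = I.cap f := by
    refine le_antisymm (hμ.1 f) ?_
    by_contra h
    push_neg at h
    have hk := key_slack I f hμs hst h
    omega
  have h2 : (matchedSet μ' f).card = b := by
    refine le_antisymm ?_ ?_
    · have h := hμ'.1 f
      rwa [show (I.withCap f b).cap f = b from Function.update_self _ _ _] at h
    · by_contra h
      push_neg at h
      have hk := key_slack I f hμ' hst h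
      omega
  refine ⟨h2, by omega, hsm _ _ ?_ ?_ (by omega)⟩
  · intro w hw; exact hμ.2.1.2 w f (mem_matchedSet.mp hw)
  · intro w hw; exact hμ'.2.1.2 w f (mem_matchedSet.mp hw)
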